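/- Constant domain completeness of QRC₁: if φ and ψ are formulas in a signature Σ and the sequent φ ⊢ ψ is not derivable in QRC₁, then there exist an adequate, finite, irreflexive relational model M in which every world has the same domain (constant domain), a world w of M, and a w-assignment g such that M, w ⊩^g φ and M, w ⊮^g ψ. -/

import Mathlib

/-!
The countermodel is syntactic. Rename the free variables of `φ` apart from all variables of `φ`
and `ψ`, obtaining the root `ρ`, and fix a finite domain `D` of fresh variables and the constants
of `φ` and `ψ`. Worlds are formulas, and accessibility is the transitive closure of `χ ↦ B` where
`◇B` is reached from `χ` by taking conjuncts and instantiating universal quantifiers by elements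
of `D`. Modal depth drops along each step, so the frame is finite and irreflexive. All worlds
share the domain `D`, and an atom holds at a world iff the world derives it. By induction on `θ`:
if `θ[g]` is reached from a world in the same way, then `θ` holds there under `g`; and if `θ`
holds at a world under `g`, the world derives `θ[g]`. For `∀` the latter needs a variable of `D`
fresh for both, which the size of `D` provides. Hence `φ` holds at the root, and if `ψ` did too,
`ρ` would derive the renamed `ψ`; undoing the renaming with the instantiation rule gives `φ ⊢ ψ`.
-/

namespace QRC1

/-- Strictly positive formulas of QRC₁ over a signature with constants `Cst`,
relation symbols `Rl`, and arity function `ar`.  Terms are either variables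
(natural numbers, left) or constants (right). -/
inductive Fml (Cst Rl : Type) (ar : Rl → ℕ) : Type
  | top : Fml Cst Rl ar
  | rel (S : Rl) (ts : Fin (ar S) → ℕ ⊕ Cst) : Fml Cst Rl ar
  | and (φ ψ : Fml Cst Rl ar) : Fml Cst Rl ar
  | dia (φ : Fml Cst Rl ar) : Fml Cst Rl ar
  | all (x : ℕ) (φ : Fml Cst Rl ar) : Fml Cst Rl ar

namespace Fml

variable {Cst Rl : Type} {ar : Rl → ℕ}

/-- Free variables of a formula. -/
def fv : Fml Cst Rl ar → Set ℕ
  | .top => ∅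
  | .rel _ ts => {x | ∃ i, ts i = Sum.inl x}
  | .and φ ψ => fv φ ∪ fv ψ
  | .dia φ => fv φ
  | .all y φ => fv φ \ {y}

/-- A formula is closed when it has no free variables. -/
def Closed (φ : Fml Cst Rl ar) : Prop := φ.fv = ∅

/-- Constants occurring in a formula. -/
def consts : Fml Cst Rl ar → Set Cst
  | .top => ∅
  | .rel _ ts => {c | ∃ i, ts i = Sum.inr c}
  | .and φ ψ => consts φ ∪ consts ψ
  | .dia φ => consts φ
  | .all _ φ => consts φ

/-- Substitution of a term for a variable, on terms. -/
def substT (x : ℕ) (t : ℕ ⊕ Cst) : ℕ ⊕ Cst → ℕ ⊕ Cst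
  | .inl y => if y = x then t else .inl y
  | .inr c => .inr c

/-- `φ.subst x t` replaces all free occurrences of variable `x` in `φ` by the term `t`. -/
def subst : Fml Cst Rl ar → ℕ → (ℕ ⊕ Cst) → Fml Cst Rl ar
  | .top, _, _ => .top
  | .rel S ts, x, t => .rel S (fun i => substT x t (ts i))
  | .and φ ψ, x, t => .and (φ.subst x t) (ψ.subst x t)
  | .dia φ, x, t => .dia (φ.subst x t)
  | .all y φ, x, t => if y = x then .all y φ else .all y (φ.subst x t)

/-- `FreeFor t x φ`: the term `t` is free for the variable `x` in `φ`, i.e. no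
free occurrence of a variable of `t` becomes bound in `φ[x/t]`. -/
def FreeFor (t : ℕ ⊕ Cst) (x : ℕ) : Fml Cst Rl ar → Prop
  | .top => True
  | .rel _ _ => True
  | .and φ ψ => FreeFor t x φ ∧ FreeFor t x ψ
  | .dia φ => FreeFor t x φ
  | .all y φ => x ∉ fv (Fml.all y φ) ∨ (t ≠ .inl y ∧ FreeFor t x φ)

/-- Modal depth. -/
def mdepth : Fml Cst Rl ar → ℕ
  | .top => 0
  | .rel _ _ => 0
  | .and φ ψ => max φ.mdepth ψ.mdepth
  | .dia φ => φ.mdepth + 1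
  | .all _ φ => φ.mdepth

/-- Quantifier depth. -/
def udepth : Fml Cst Rl ar → ℕ
  | .top => 0
  | .rel _ _ => 0
  | .and φ ψ => max φ.udepth ψ.udepth
  | .dia φ => φ.udepth
  | .all _ φ => φ.udepth + 1

/-- Number of distinct constants occurring in a formula. -/
noncomputable def cdepth (φ : Fml Cst Rl ar) : ℕ := φ.consts.ncard

/-- Size of a formula (for termination purposes). -/
def size : Fml Cst Rl ar → ℕ
  | .top => 1
  | .rel _ _ => 1
  | .and φ ψ => φ.size + ψ.size + 1
  | .dia φ => φ.size + 1
  | .all _ φ => φ.size + 1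

theorem size_subst (φ : Fml Cst Rl ar) (x : ℕ) (t : ℕ ⊕ Cst) :
    (φ.subst x t).size = φ.size := by
  induction φ generalizing x t with
  | top => rfl
  | rel S ts => rfl
  | and φ ψ ihφ ihψ => simp [subst, size, ihφ, ihψ]
  | dia φ ih => simp [subst, size, ih]
  | all y φ ih => by_cases h : y = x <;> simp [subst, h, size, ih]

/-- The closure of a formula under a set of constants `C`, where the
subformulas of `∀x φ` are all `φ[x/c]` for `c ∈ C`. -/
def cl (C : Set Cst) : Fml Cst Rl ar → Set (Fml Cst Rl ar)
  | .top => {.top}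
  | .rel S ts => {.rel S ts, .top}
  | .and φ ψ => {.and φ ψ} ∪ φ.cl C ∪ ψ.cl C
  | .dia φ => {.dia φ} ∪ φ.cl C
  | .all x φ => {.all x φ} ∪ ⋃ c ∈ C, (φ.subst x (.inr c)).cl C
termination_by φ => φ.size
decreasing_by all_goals (simp [size, size_subst]; try omega)

/-- Renaming of constants along a map `f` (used for signature extensions). -/
def mapC {Cst' : Type} (f : Cst → Cst') : Fml Cst Rl ar → Fml Cst' Rl ar
  | .top => .top
  | .rel S ts => .rel S (fun i => Sum.map id f (ts i))
  | .and φ ψ => .and (φ.mapC f) (ψ.mapC f)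
  | .dia φ => .dia (φ.mapC f)
  | .all x φ => .all x (φ.mapC f)

/-- Simultaneous substitution of terms for variables. -/
def msubst (σ : ℕ → ℕ ⊕ Cst) : Fml Cst Rl ar → Fml Cst Rl ar
  | .top => .top
  | .rel S ts => .rel S (fun i => match ts i with
      | .inl x => σ x
      | .inr c => .inr c)
  | .and φ ψ => .and (φ.msubst σ) (ψ.msubst σ)
  | .dia φ => .dia (φ.msubst σ)
  | .all x φ => .all x (φ.msubst (Function.update σ x (.inl x)))

/-- `φ^g`: replace every free variable `x` of `φ` by the constant `g x`. -/
def capp (g : ℕ → Cst) (φ : Fml Cst Rl ar) : Fml Cst Rl ar :=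
  φ.msubst (fun x => .inr (g x))

end Fml

/-- The derivability relation `φ ⊢ ψ` of the calculus QRC₁. -/
inductive Der {Cst Rl : Type} {ar : Rl → ℕ} : Fml Cst Rl ar → Fml Cst Rl ar → Prop
  | top (φ) : Der φ .top
  | refl (φ) : Der φ φ
  | andE1 (φ ψ) : Der (.and φ ψ) φ
  | andE2 (φ ψ) : Der (.and φ ψ) ψ
  | andI {φ ψ χ} : Der φ ψ → Der φ χ → Der φ (.and ψ χ)
  | cut {φ ψ χ} : Der φ ψ → Der ψ χ → Der φ χ
  | diaMono {φ ψ} : Der φ ψ → Der (.dia φ) (.dia ψ)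
  | diaTrans (φ) : Der (.dia (.dia φ)) (.dia φ)
  | allI {φ ψ} (x) : Der φ ψ → x ∉ φ.fv → Der φ (.all x ψ)
  | allE {φ ψ} (x) (t : ℕ ⊕ Cst) : Der (φ.subst x t) ψ → Fml.FreeFor t x φ →
      Der (.all x φ) ψ
  | inst {φ ψ} (x) (t : ℕ ⊕ Cst) : Der φ ψ → Fml.FreeFor t x φ → Fml.FreeFor t x ψ →
      Der (φ.subst x t) (ψ.subst x t)
  | genC {φ ψ} (x) (c : Cst) : Der (φ.subst x (.inr c)) (ψ.subst x (.inr c)) →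
      c ∉ φ.consts → c ∉ ψ.consts → Der φ ψ

section Depths

variable {Cst Rl : Type} {ar : Rl → ℕ}

/-- Modal depth of a set of formulas (the supremum of the modal depths). -/
noncomputable def mdepthSet (Γ : Set (Fml Cst Rl ar)) : ℕ := sSup (Fml.mdepth '' Γ)

/-- Quantifier depth of a set of formulas. -/
noncomputable def udepthSet (Γ : Set (Fml Cst Rl ar)) : ℕ := sSup (Fml.udepth '' Γ)

/-- Maximum number of distinct constants per formula in a set of formulas. -/
noncomputable def cdepthSet (Γ : Set (Fml Cst Rl ar)) : ℕ := sSup (Fml.cdepth '' Γ)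

/-- Closure of a set of formulas under a set of constants. -/
def clSet (C : Set Cst) (Γ : Set (Fml Cst Rl ar)) : Set (Fml Cst Rl ar) :=
  ⋃ γ ∈ Γ, γ.cl C

/-- Conjunction of a finite list of formulas. -/
def conjList : List (Fml Cst Rl ar) → Fml Cst Rl ar
  | [] => .top
  | φ :: L => .and φ (conjList L)

end Depths

/-- A pair `⟨p⁺, p⁻⟩` of sets of formulas. -/
structure Pair (Cst Rl : Type) (ar : Rl → ℕ) where
  pos : Set (Fml Cst Rl ar)
  neg : Set (Fml Cst Rl ar)

namespace Pair

variable {Cst Rl : Type} {ar : Rl → ℕ}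

/-- All formulas of the pair are closed. -/
def ClosedP (p : Pair Cst Rl ar) : Prop := ∀ φ ∈ p.pos ∪ p.neg, φ.Closed

/-- Consistency: the conjunction of (finitely many formulas of) `p⁺` does not
derive any formula of `p⁻`. -/
def Consistent (p : Pair Cst Rl ar) : Prop :=
  ∀ δ ∈ p.neg, ∀ L : List (Fml Cst Rl ar), (∀ χ ∈ L, χ ∈ p.pos) → ¬ Der (conjList L) δ

/-- `Φ`-maximality: every formula of `Φ` is in `p⁺` or in `p⁻`, and `p`
contains only formulas of `Φ`. -/
def MaximalIn (Φ : Set (Fml Cst Rl ar)) (p : Pair Cst Rl ar) : Prop :=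
  (∀ χ ∈ Φ, χ ∈ p.pos ∨ χ ∈ p.neg) ∧ p.pos ∪ p.neg ⊆ Φ

/-- Fully witnessed: every negative universal has a constant witness. -/
def FullyWitnessed (p : Pair Cst Rl ar) : Prop :=
  ∀ (x : ℕ) (φ : Fml Cst Rl ar), Fml.all x φ ∈ p.neg →
    ∃ c : Cst, φ.subst x (.inr c) ∈ p.neg

/-- `Φ`-maximal, consistent, fully witnessed (and closed) pair. -/
def MCW (Φ : Set (Fml Cst Rl ar)) (p : Pair Cst Rl ar) : Prop :=
  p.ClosedP ∧ p.MaximalIn Φ ∧ p.Consistent ∧ p.FullyWitnessed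

end Pair

/-- The relation `R̂` between pairs. -/
def hatR {Cst Rl : Type} {ar : Rl → ℕ} (p q : Pair Cst Rl ar) : Prop :=
  (∀ φ : Fml Cst Rl ar, Fml.dia φ ∈ p.neg → φ ∈ q.neg ∧ Fml.dia φ ∈ q.neg) ∧
  ∃ ψ : Fml Cst Rl ar, Fml.dia ψ ∈ p.pos ∧ Fml.dia ψ ∈ q.neg

/-- A relational model for QRC₁. -/
structure Model (Cst Rl : Type) (ar : Rl → ℕ) where
  W : Type
  R : W → W → Prop
  Dom : W → Type
  finDom : ∀ w, Finite (Dom w)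
  η : ∀ w v, R w v → Dom w → Dom v
  I : ∀ w, Cst → Dom w
  J : ∀ w (S : Rl), Set (Fin (ar S) → Dom w)

namespace Model

variable {Cst Rl : Type} {ar : Rl → ℕ} (M : Model Cst Rl ar)

/-- Value of a term under a `w`-assignment. -/
def tval {w : M.W} (g : ℕ → M.Dom w) : ℕ ⊕ Cst → M.Dom w
  | .inl x => g x
  | .inr c => M.I w c

/-- Kripke satisfaction `M, w ⊩^g φ`. -/
def Sat : (w : M.W) → (g : ℕ → M.Dom w) → Fml Cst Rl ar → Prop
  | _, _, .top => True
  | w, g, .rel S ts => (fun i => M.tval g (ts i)) ∈ M.J w S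
  | w, g, .and φ ψ => Sat w g φ ∧ Sat w g ψ
  | w, g, .dia φ => ∃ (v : M.W) (h : M.R w v), Sat v (fun n => M.η w v h (g n)) φ
  | w, g, .all x φ => ∀ h : ℕ → M.Dom w, (∀ y, y ≠ x → h y = g y) → Sat w h φ

/-- Adequate models: transitive accessibility, transitive `η` functions, and
concordant interpretation of constants. -/
structure Adequate : Prop where
  trans : Transitive M.R
  etaTrans : ∀ {w u v : M.W} (h1 : M.R w u) (h2 : M.R u v) (h3 : M.R w v),
    M.η w v h3 = M.η u v h2 ∘ M.η w u h1
  concord : ∀ {w u : M.W} (h : M.R w u) (c : Cst), M.I u c = M.η w u h (M.I w c)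

/-- Constant domain: all worlds have the same domain. -/
def ConstantDomain : Prop := ∀ w v : M.W, M.Dom w = M.Dom v

end Model

namespace Fml

variable {Cst Rl : Type} {ar : Rl → ℕ}

def bv : Fml Cst Rl ar → Set ℕ
  | .top => ∅
  | .rel _ _ => ∅
  | .and φ ψ => bv φ ∪ bv ψ
  | .dia φ => bv φ
  | .all y φ => insert y (bv φ)

def varBound : Fml Cst Rl ar → ℕ
  | .top => 0
  | .rel _ ts => Finset.univ.sup fun i => Sum.elim (· + 1) (fun _ => 0) (ts i)
  | .and φ ψ => max φ.varBound ψ.varBound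
  | .dia φ => φ.varBound
  | .all y φ => max (y + 1) φ.varBound

/-- Bounds the number of free variables of every substitution instance of the formula. -/
def aritySum : Fml Cst Rl ar → ℕ
  | .top => 0
  | .rel S _ => ar S
  | .and φ ψ => φ.aritySum + ψ.aritySum
  | .dia φ => φ.aritySum
  | .all _ φ => φ.aritySum

theorem lt_varBound_of_mem_fv {A : Fml Cst Rl ar} {x : ℕ} (h : x ∈ A.fv) : x < A.varBound := by
  induction A with
  | top => exact h.elim
  | rel S ts =>
    obtain ⟨i, hi⟩ := h
    have := Finset.le_sup (f := fun i => Sum.elim (· + 1) (fun _ => 0) (ts i)) (Finset.mem_univ i)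
    simp only [hi, Sum.elim_inl] at this
    exact this
  | and φ ψ ihφ ihψ => exact h.elim (lt_max_of_lt_left ∘ ihφ) (lt_max_of_lt_right ∘ ihψ)
  | dia φ ih => exact ih h
  | all y φ ih => exact lt_max_of_lt_right (ih h.1)

theorem lt_varBound_of_mem_bv {A : Fml Cst Rl ar} {x : ℕ} (h : x ∈ A.bv) : x < A.varBound := by
  induction A with
  | top | rel => exact h.elim
  | and φ ψ ihφ ihψ => exact h.elim (lt_max_of_lt_left ∘ ihφ) (lt_max_of_lt_right ∘ ihψ)
  | dia φ ih => exact ih h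
  | all y φ ih =>
    rcases h with rfl | h
    · exact lt_max_of_lt_left x.lt_succ_self
    · exact lt_max_of_lt_right (ih h)

theorem fv_finite (A : Fml Cst Rl ar) : A.fv.Finite :=
  (Set.finite_Iio A.varBound).subset fun _ => lt_varBound_of_mem_fv

theorem consts_finite (A : Fml Cst Rl ar) : A.consts.Finite := by
  induction A with
  | top => exact Set.finite_empty
  | rel S ts =>
    refine (Set.finite_range fun i => (ts i).elim (fun _ => none) some).preimage_embedding
      ⟨some, Option.some_injective _⟩ |>.subset ?_
    rintro c ⟨i, hi⟩
    exact ⟨i, by simp [hi]⟩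
  | and φ ψ ihφ ihψ => exact ihφ.union ihψ
  | dia φ ih => exact ih
  | all y φ ih => exact ih

theorem ncard_fv_le_aritySum (A : Fml Cst Rl ar) : A.fv.ncard ≤ A.aritySum := by
  induction A with
  | top => simp [fv]
  | rel S ts =>
    have hsub : fv (.rel S ts) ⊆ Set.range fun i => (ts i).elim id fun _ => 0 := by
      rintro x ⟨i, hi⟩
      exact ⟨i, by simp [hi]⟩
    calc (fv (.rel S ts)).ncard ≤ (Set.range fun i => (ts i).elim id fun _ => 0).ncard :=
          Set.ncard_le_ncard hsub (Set.finite_range _)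
      _ ≤ (Set.univ : Set (Fin (ar S))).ncard := by
          rw [← Set.image_univ]; exact Set.ncard_image_le
      _ = ar S := by simp [Set.ncard_univ]
  | and φ ψ ihφ ihψ => exact (Set.ncard_union_le _ _).trans (Nat.add_le_add ihφ ihψ)
  | dia φ ih => exact ih
  | all y φ ih => exact (Set.ncard_le_ncard Set.sdiff_subset (fv_finite φ)).trans ih

theorem aritySum_subst (A : Fml Cst Rl ar) (x : ℕ) (t : ℕ ⊕ Cst) :
    (A.subst x t).aritySum = A.aritySum := by
  induction A generalizing x t with
  | top | rel => rfl
  | and φ ψ ihφ ihψ => simp [subst, aritySum, ihφ, ihψ]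
  | dia φ ih => simp [subst, aritySum, ih]
  | all y φ ih => by_cases h : y = x <;> simp [subst, h, aritySum, ih]

theorem bv_subst (A : Fml Cst Rl ar) (x : ℕ) (t : ℕ ⊕ Cst) : (A.subst x t).bv = A.bv := by
  induction A generalizing x t with
  | top | rel => rfl
  | and φ ψ ihφ ihψ => simp [subst, bv, ihφ, ihψ]
  | dia φ ih => simp [subst, bv, ih]
  | all y φ ih => by_cases h : y = x <;> simp [subst, h, bv, ih]

theorem mdepth_subst (A : Fml Cst Rl ar) (x : ℕ) (t : ℕ ⊕ Cst) :
    (A.subst x t).mdepth = A.mdepth := by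
  induction A generalizing x t with
  | top | rel => rfl
  | and φ ψ ihφ ihψ => simp [subst, mdepth, ihφ, ihψ]
  | dia φ ih => simp [subst, mdepth, ih]
  | all y φ ih => by_cases h : y = x <;> simp [subst, h, mdepth, ih]

theorem aritySum_msubst (A : Fml Cst Rl ar) (σ : ℕ → ℕ ⊕ Cst) :
    (A.msubst σ).aritySum = A.aritySum := by
  induction A generalizing σ with
  | top | rel => rfl
  | and φ ψ ihφ ihψ => simp [msubst, aritySum, ihφ, ihψ]
  | dia φ ih => simp [msubst, aritySum, ih]
  | all y φ ih => simp [msubst, aritySum, ih]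

theorem bv_msubst (A : Fml Cst Rl ar) (σ : ℕ → ℕ ⊕ Cst) : (A.msubst σ).bv = A.bv := by
  induction A generalizing σ with
  | top | rel => rfl
  | and φ ψ ihφ ihψ => simp [msubst, bv, ihφ, ihψ]
  | dia φ ih => simp [msubst, bv, ih]
  | all y φ ih => simp [msubst, bv, ih]

theorem substT_of_ne {x : ℕ} {t s : ℕ ⊕ Cst} (h : s ≠ .inl x) : substT x t s = s := by
  rcases s with y | c
  · exact if_neg fun hyx => h (congrArg Sum.inl hyx)
  · rfl

theorem subst_of_notMem_fv {A : Fml Cst Rl ar} {x : ℕ} (t : ℕ ⊕ Cst) (h : x ∉ A.fv) :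
    A.subst x t = A := by
  induction A with
  | top => rfl
  | rel S ts =>
    refine congrArg _ (funext fun i => substT_of_ne fun hi => h ⟨i, hi⟩)
  | and φ ψ ihφ ihψ =>
    simp only [fv, Set.mem_union, not_or] at h
    simp [subst, ihφ h.1, ihψ h.2]
  | dia φ ih => simp [subst, ih h]
  | all y φ ih =>
    by_cases hyx : y = x
    · simp [subst, hyx]
    · simp only [subst, if_neg hyx]
      rw [ih fun hx => h ⟨hx, Ne.symm hyx⟩]

theorem notMem_fv_subst (A : Fml Cst Rl ar) {x : ℕ} {t : ℕ ⊕ Cst} (ht : t ≠ .inl x) :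
    x ∉ (A.subst x t).fv := by
  induction A with
  | top => exact id
  | rel S ts =>
    rintro ⟨i, hi⟩
    rcases hts : ts i with y | c <;> simp only [hts, substT, reduceCtorEq] at hi
    split_ifs at hi with hyx
    · exact ht hi
    · exact hyx (Sum.inl.inj hi)
  | and φ ψ ihφ ihψ => exact fun h => h.elim ihφ ihψ
  | dia φ ih => exact ih
  | all y φ ih =>
    by_cases hyx : y = x
    · simp [subst, hyx, fv]
    · simp only [subst, if_neg hyx]
      exact fun h => ih h.1

theorem subst_subst_cancel {A : Fml Cst Rl ar} {x v : ℕ}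
    (hfv : v ∉ A.fv) (hbv : v ∉ A.bv) (hvx : v ≠ x) :
    (A.subst x (.inl v)).subst v (.inl x) = A := by
  induction A generalizing x with
  | top => rfl
  | rel S ts =>
    refine congrArg _ (funext fun i => ?_)
    rcases hts : ts i with y | c
    · by_cases hyx : y = x
      · simp [hts, hyx, substT]
      · have hyv : y ≠ v := fun hy => hfv ⟨i, by rw [hts, hy]⟩
        simp [hts, substT, hyx, hyv]
    · simp [hts, substT]
  | and φ ψ ihφ ihψ =>
    simp only [fv, bv, Set.mem_union, not_or] at hfv hbv
    simp only [subst, ihφ hfv.1 hbv.1 hvx, ihψ hfv.2 hbv.2 hvx]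
  | dia φ ih => simp only [subst, ih hfv hbv hvx]
  | all z φ ih =>
    simp only [bv, Set.mem_insert_iff, not_or] at hbv
    have hzv : z ≠ v := Ne.symm hbv.1
    have hv : v ∉ φ.fv := fun hv => hfv ⟨hv, hbv.1⟩
    by_cases hzx : z = x
    · simp only [subst, if_pos hzx, if_neg hzv]
      rw [subst_of_notMem_fv _ hv]
    · simp only [subst, if_neg hzx, if_neg hzv, ih hv hbv.2 hvx]

theorem freeFor_of_bv {A : Fml Cst Rl ar} {x : ℕ} {t : ℕ ⊕ Cst}
    (h : ∀ u, t = .inl u → u ∉ A.bv) : FreeFor t x A := by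
  induction A with
  | top | rel => trivial
  | and φ ψ ihφ ihψ =>
    exact ⟨ihφ fun u hu hb => h u hu (Or.inl hb), ihψ fun u hu hb => h u hu (Or.inr hb)⟩
  | dia φ ih => exact ih h
  | all z φ ih =>
    exact Or.inr ⟨fun ht => h z ht (Set.mem_insert z _),
      ih fun u hu hb => h u hu (Set.mem_insert_of_mem z hb)⟩

theorem freeFor_subst_cancel {A : Fml Cst Rl ar} {x v : ℕ}
    (hfv : v ∉ A.fv) (hbv : v ∉ A.bv) :
    FreeFor (.inl x) v (A.subst x (.inl v)) := by
  induction A generalizing x with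
  | top | rel => trivial
  | and φ ψ ihφ ihψ =>
    simp only [fv, bv, Set.mem_union, not_or] at hfv hbv
    exact ⟨ihφ hfv.1 hbv.1, ihψ hfv.2 hbv.2⟩
  | dia φ ih => exact ih hfv hbv
  | all z φ ih =>
    simp only [bv, Set.mem_insert_iff, not_or] at hbv
    by_cases hzx : z = x
    · simp only [subst, if_pos hzx]
      exact Or.inl hfv
    · simp only [subst, if_neg hzx]
      exact Or.inr ⟨fun hc => hzx (Sum.inl.inj hc).symm, ih (fun hv => hfv ⟨hv, hbv.1⟩) hbv.2⟩

theorem exists_of_mem_fv_msubst {A : Fml Cst Rl ar} {σ : ℕ → ℕ ⊕ Cst} {x : ℕ}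
    (h : x ∈ (A.msubst σ).fv) : ∃ y ∈ A.fv, σ y = .inl x := by
  induction A generalizing σ with
  | top => exact h.elim
  | rel S ts =>
    obtain ⟨i, hi⟩ := h
    rcases hts : ts i with y | c <;> simp only [hts, reduceCtorEq] at hi
    exact ⟨y, ⟨i, hts⟩, hi⟩
  | and φ ψ ihφ ihψ =>
    rcases h with h | h
    · obtain ⟨y, hy, hσ⟩ := ihφ h
      exact ⟨y, Or.inl hy, hσ⟩
    · obtain ⟨y, hy, hσ⟩ := ihψ h
      exact ⟨y, Or.inr hy, hσ⟩
  | dia φ ih => exact ih h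
  | all z φ ih =>
    obtain ⟨h, hxz⟩ := h
    obtain ⟨y, hy, hσ⟩ := ih h
    by_cases hyz : y = z
    · subst hyz
      simp only [Function.update_self, Sum.inl.injEq] at hσ
      exact absurd hσ.symm hxz
    · rw [Function.update_of_ne hyz] at hσ
      exact ⟨y, ⟨hy, hyz⟩, hσ⟩

theorem msubst_congr_fv {A : Fml Cst Rl ar} {σ₁ σ₂ : ℕ → ℕ ⊕ Cst}
    (h : ∀ y ∈ A.fv, σ₁ y = σ₂ y) : A.msubst σ₁ = A.msubst σ₂ := by
  induction A generalizing σ₁ σ₂ with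
  | top => rfl
  | rel S ts =>
    refine congrArg _ (funext fun i => ?_)
    rcases hts : ts i with y | c
    · exact h y ⟨i, hts⟩
    · rfl
  | and φ ψ ihφ ihψ =>
    simp only [msubst, ihφ fun y hy => h y (Or.inl hy), ihψ fun y hy => h y (Or.inr hy)]
  | dia φ ih => simp only [msubst, ih h]
  | all z φ ih =>
    refine congrArg _ (ih fun y hy => ?_)
    by_cases hyz : y = z
    · simp [hyz]
    · simp only [Function.update_of_ne hyz]
      exact h y ⟨hy, hyz⟩

theorem msubst_inl (A : Fml Cst Rl ar) : A.msubst Sum.inl = A := by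
  induction A with
  | top => rfl
  | rel S ts =>
    refine congrArg _ (funext fun i => ?_)
    rcases ts i with y | c <;> rfl
  | and φ ψ ihφ ihψ => simp only [msubst, ihφ, ihψ]
  | dia φ ih => simp only [msubst, ih]
  | all z φ ih => simp only [msubst, Function.update_eq_self z, ih]

/-- Substituting `t` for `x` after `σ` composes the two substitutions, provided `x` is either
never bound in `A` or never introduced by `σ`. -/
theorem subst_msubst {A : Fml Cst Rl ar} {σ : ℕ → ℕ ⊕ Cst} {x : ℕ} {t : ℕ ⊕ Cst}
    (h : x ∈ A.bv → ∀ y, y ≠ x → σ y ≠ .inl x) :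
    (A.msubst σ).subst x t = A.msubst (substT x t ∘ σ) := by
  induction A generalizing σ with
  | top => rfl
  | rel S ts =>
    refine congrArg _ (funext fun i => ?_)
    rcases hts : ts i with y | c <;> simp [hts, substT]
  | and φ ψ ihφ ihψ =>
    simp only [msubst, subst, ihφ (h ∘ Or.inl), ihψ (h ∘ Or.inr)]
  | dia φ ih => simp only [msubst, subst, ih h]
  | all z φ ih =>
    by_cases hzx : z = x
    · subst hzx
      simp only [msubst, subst, if_true]
      congr 2
      funext y
      by_cases hyz : y = z
      · simp [hyz]
      · simp [Function.update_of_ne hyz, substT_of_ne (h (Set.mem_insert z _) y hyz)]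
    · have h' : x ∈ φ.bv → ∀ y, y ≠ x → Function.update σ z (.inl z) y ≠ .inl x := by
        intro hx y hyx
        by_cases hyz : y = z
        · simpa [hyz] using hzx
        · simpa [Function.update_of_ne hyz] using h (Set.mem_insert_of_mem z hx) y hyx
      simp only [msubst, subst, if_neg hzx, ih h']
      congr 2
      funext y
      by_cases hyz : y = z
      · simp [hyz, substT, hzx]
      · simp [Function.update_of_ne hyz]

theorem subst_msubst_update {A : Fml Cst Rl ar} {σ : ℕ → ℕ ⊕ Cst} {x : ℕ} {t : ℕ ⊕ Cst}
    (h : ∀ y, y ≠ x → σ y ≠ .inl x) :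
    (A.msubst (Function.update σ x (.inl x))).subst x t = A.msubst (Function.update σ x t) := by
  rw [subst_msubst fun _ y hy => by simpa [Function.update_of_ne hy] using h y hy]
  congr 1
  funext y
  by_cases hyx : y = x
  · simp [hyx, substT]
  · simp [Function.update_of_ne hyx, substT_of_ne (h y hyx)]

theorem freeFor_msubst {A : Fml Cst Rl ar} {σ : ℕ → ℕ ⊕ Cst} {a v : ℕ} (hv : v ∉ A.bv)
    (hσ : ∀ y ∈ A.fv, σ y = .inl v → y = a) : FreeFor (.inl a) v (A.msubst σ) := by
  induction A generalizing σ with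
  | top | rel => trivial
  | and φ ψ ihφ ihψ =>
    simp only [bv, Set.mem_union, not_or] at hv
    exact ⟨ihφ hv.1 fun y hy => hσ y (Or.inl hy), ihψ hv.2 fun y hy => hσ y (Or.inr hy)⟩
  | dia φ ih => exact ih hv hσ
  | all z φ ih =>
    simp only [bv, Set.mem_insert_iff, not_or] at hv
    have hσ' : ∀ y ∈ φ.fv, Function.update σ z (.inl z) y = .inl v → y = z ∨ y = a := by
      intro y hy hyv
      by_cases hyz : y = z
      · exact Or.inl hyz
      · rw [Function.update_of_ne hyz] at hyv
        exact Or.inr (hσ y ⟨hy, hyz⟩ hyv)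
    by_cases hza : z = a
    · refine Or.inl fun ⟨hmem, _⟩ => ?_
      obtain ⟨y, hy, hyv⟩ := exists_of_mem_fv_msubst hmem
      obtain rfl : y = z := (hσ' y hy hyv).elim id fun h => h.trans hza.symm
      simp only [Function.update_self, Sum.inl.injEq] at hyv
      exact hv.1 hyv.symm
    · refine Or.inr ⟨fun hc => hza (Sum.inl.inj hc).symm, ih hv.2 fun y hy hyv => ?_⟩
      rcases hσ' y hy hyv with rfl | rfl
      · simp only [Function.update_self, Sum.inl.injEq] at hyv
        exact absurd hyv.symm hv.1
      · rfl

def shiftBelow (N n : ℕ) (y : ℕ) : ℕ ⊕ Cst := if y < n then .inl (N + y) else .inl y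

theorem msubst_shiftBelow_zero (A : Fml Cst Rl ar) (N : ℕ) : A.msubst (shiftBelow N 0) = A := by
  have : shiftBelow N 0 = (Sum.inl : ℕ → ℕ ⊕ Cst) := funext fun y => by simp [shiftBelow]
  rw [this, msubst_inl]

theorem subst_msubst_shiftBelow_succ {A : Fml Cst Rl ar} {N n : ℕ} (hA : A.varBound ≤ N) :
    (A.msubst (shiftBelow N (n + 1))).subst (N + n) (.inl n) = A.msubst (shiftBelow N n) := by
  rw [subst_msubst fun h => absurd (lt_varBound_of_mem_bv h) (by omega)]
  refine msubst_congr_fv fun y hy => ?_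
  have := lt_varBound_of_mem_fv hy
  simp only [shiftBelow, Function.comp_apply]
  grind [substT]

theorem freeFor_msubst_shiftBelow_succ {A : Fml Cst Rl ar} {N n : ℕ} (hA : A.varBound ≤ N) :
    FreeFor (.inl n) (N + n) (A.msubst (shiftBelow N (n + 1))) := by
  refine freeFor_msubst (fun h => ?_) fun y hy => ?_
  · have := lt_varBound_of_mem_bv h
    omega
  · have := lt_varBound_of_mem_fv hy
    unfold shiftBelow
    split_ifs <;> simp only [Sum.inl.injEq] <;> omega

end Fml

namespace Der

variable {Cst Rl : Type} {ar : Rl → ℕ}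

open Fml

theorem all_of_subst_fresh {χ A : Fml Cst Rl ar} {x v : ℕ} (h : Der χ (A.subst x (.inl v)))
    (hχ : v ∉ χ.fv) (hfv : v ∉ A.fv) (hbv : v ∉ A.bv) (hvx : v ≠ x) : Der χ (.all x A) := by
  have hren : Der (.all v (A.subst x (.inl v))) A :=
    allE v (.inl x) (by rw [subst_subst_cancel hfv hbv hvx]; exact refl A)
      (freeFor_subst_cancel hfv hbv)
  exact cut (allI v h hχ)
    (allI x hren fun hx => notMem_fv_subst A (by simpa using hvx) hx.1)

theorem of_msubst_shiftBelow {φ ψ : Fml Cst Rl ar} {N : ℕ} (hφ : φ.varBound ≤ N)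
    (hψ : ψ.varBound ≤ N) :
    ∀ n, Der (φ.msubst (shiftBelow N n)) (ψ.msubst (shiftBelow N n)) → Der φ ψ
  | 0, h => by simpa only [msubst_shiftBelow_zero] using h
  | n + 1, h => by
    refine of_msubst_shiftBelow hφ hψ n ?_
    have := inst (N + n) (.inl n) h (freeFor_msubst_shiftBelow_succ hφ)
      (freeFor_msubst_shiftBelow_succ hψ)
    rwa [subst_msubst_shiftBelow_succ hφ, subst_msubst_shiftBelow_succ hψ] at this

end Der

variable {Cst Rl : Type} {ar : Rl → ℕ}

open Fml Relation

inductive Conjunct (D : Set (ℕ ⊕ Cst)) : Fml Cst Rl ar → Fml Cst Rl ar → Prop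
  | refl (A) : Conjunct D A A
  | andl {A B C} : Conjunct D A B → Conjunct D A (.and B C)
  | andr {A B C} : Conjunct D A C → Conjunct D A (.and B C)
  | all {A B x d} : d ∈ D → Conjunct D A (B.subst x d) → Conjunct D A (.all x B)

namespace Conjunct

variable {D : Set (ℕ ⊕ Cst)} {A B χ : Fml Cst Rl ar}

theorem trans (hAB : Conjunct D A B) (hBχ : Conjunct D B χ) : Conjunct D A χ := by
  induction hBχ with
  | refl => exact hAB
  | andl _ ih => exact andl ih
  | andr _ ih => exact andr ih
  | all hd _ ih => exact all hd ih

theorem der (h : Conjunct D A χ) (hD : Disjoint {u | Sum.inl u ∈ D} χ.bv) : Der χ A := by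
  induction h with
  | refl => exact .refl _
  | andl _ ih => exact .cut (.andE1 _ _) (ih (hD.mono_right Set.subset_union_left))
  | andr _ ih => exact .cut (.andE2 _ _) (ih (hD.mono_right Set.subset_union_right))
  | @all B x d hd _ ih =>
    have hB : Disjoint {u | Sum.inl u ∈ D} B.bv := hD.mono_right (Set.subset_insert x _)
    refine .allE x d (ih (by rwa [bv_subst])) (freeFor_of_bv fun u hu => ?_)
    exact Set.disjoint_left.mp hB (show Sum.inl u ∈ D from hu ▸ hd)

theorem mdepth_le (h : Conjunct D A χ) : A.mdepth ≤ χ.mdepth := by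
  induction h with
  | refl => exact le_rfl
  | andl _ ih => exact ih.trans (le_max_left _ _)
  | andr _ ih => exact ih.trans (le_max_right _ _)
  | all _ _ ih => exact ih.trans_eq (mdepth_subst _ _ _)

theorem bv_subset (h : Conjunct D A χ) : A.bv ⊆ χ.bv := by
  induction h with
  | refl => exact subset_rfl
  | andl _ ih => exact ih.trans Set.subset_union_left
  | andr _ ih => exact ih.trans Set.subset_union_right
  | all _ _ ih => exact (ih.trans_eq (bv_subst _ _ _)).trans (Set.subset_insert _ _)

theorem aritySum_le (h : Conjunct D A χ) : A.aritySum ≤ χ.aritySum := by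
  induction h with
  | refl => exact le_rfl
  | andl _ ih => exact ih.trans (Nat.le_add_right _ _)
  | andr _ ih => exact ih.trans (Nat.le_add_left _ _)
  | all _ _ ih => exact ih.trans_eq (aritySum_subst _ _ _)

theorem finite_setOf (hD : D.Finite) : ∀ χ : Fml Cst Rl ar, {A | Conjunct D A χ}.Finite
  | .and B C => by
    refine ((finite_setOf hD B).union (finite_setOf hD C)).insert (B.and C) |>.subset ?_
    rintro A (_ | ⟨h⟩ | ⟨h⟩)
    exacts [Or.inl rfl, Or.inr (Or.inl h), Or.inr (Or.inr h)]
  | .all x B => by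
    refine (hD.biUnion fun d _ => finite_setOf hD (B.subst x d)).insert (B.all x) |>.subset ?_
    rintro A (_ | _ | _ | ⟨hd, h⟩)
    exacts [Or.inl rfl, Or.inr (Set.mem_biUnion hd h)]
  | .top | .rel _ _ | .dia _ => (Set.finite_singleton _).subset fun A h => by cases h; rfl
termination_by χ => χ.size
decreasing_by all_goals simp [size, size_subst]; try omega

end Conjunct

def DiaStep (D : Set (ℕ ⊕ Cst)) (χ B : Fml Cst Rl ar) : Prop := Conjunct D (.dia B) χ

namespace DiaStep

variable {D : Set (ℕ ⊕ Cst)} {B χ : Fml Cst Rl ar}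

theorem mdepth_lt (h : DiaStep D χ B) : B.mdepth < χ.mdepth :=
  Nat.lt_of_succ_le (Conjunct.mdepth_le h)

theorem transGen_mdepth_lt (h : TransGen (DiaStep D) χ B) : B.mdepth < χ.mdepth :=
  TransGen.trans_induction_on h mdepth_lt fun _ _ h₁ h₂ => h₂.trans h₁

theorem transGen_bv_subset (h : TransGen (DiaStep D) χ B) : B.bv ⊆ χ.bv :=
  TransGen.trans_induction_on h Conjunct.bv_subset fun _ _ h₁ h₂ => h₂.trans h₁

theorem transGen_aritySum_le (h : TransGen (DiaStep D) χ B) : B.aritySum ≤ χ.aritySum :=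
  TransGen.trans_induction_on h Conjunct.aritySum_le fun _ _ h₁ h₂ => h₂.trans h₁

theorem transGen_der (h : TransGen (DiaStep D) χ B)
    (hD : Disjoint {u | Sum.inl u ∈ D} χ.bv) : Der χ (.dia B) := by
  induction h with
  | single h => exact h.der hD
  | tail hχb hbB ih =>
    exact .cut (.cut ih (.diaMono (hbB.der (hD.mono_right (transGen_bv_subset hχb)))))
      (.diaTrans _)

theorem finite_setOf_transGen (hD : D.Finite) (χ : Fml Cst Rl ar) :
    {B | TransGen (DiaStep D) χ B}.Finite := by
  induction hn : χ.mdepth using Nat.strong_induction_on generalizing χ with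
  | _ n ih =>
  have hsteps : {b | DiaStep D χ b}.Finite :=
    (Conjunct.finite_setOf hD χ).preimage fun _ _ _ _ h => by cases h; rfl
  refine (hsteps.biUnion fun b hb => (ih _ (hn ▸ mdepth_lt hb) b rfl).insert b).subset ?_
  intro B h
  obtain ⟨b, hb, hbB⟩ := TransGen.head'_iff.mp h
  refine Set.mem_biUnion hb ?_
  rcases reflTransGen_iff_eq_or_transGen.mp hbB with rfl | hbB
  exacts [Set.mem_insert _ _, Set.mem_insert_of_mem _ hbB]

end DiaStep

theorem msubst_update_val {D : Finset (ℕ ⊕ Cst)} {θ : Fml Cst Rl ar} {x : ℕ} (hx : Sum.inl x ∉ D)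
    (g : ℕ → D) (d : D) :
    (θ.msubst (Function.update (Subtype.val ∘ g) x (.inl x))).subst x d.1
      = θ.msubst (Subtype.val ∘ Function.update g x d) := by
  rw [subst_msubst_update (σ := Subtype.val ∘ g) fun y _ hy => hx (hy ▸ (g y).2),
    Function.comp_update]

section CanonicalModel

variable (D : Finset (ℕ ⊕ Cst)) (d₀ : D) (ρ : Fml Cst Rl ar)

open Classical in
/-- Constants outside `D` get the junk value `d₀`; the truth lemmas only concern formulas whose
constants lie in `D`. -/
noncomputable def canonicalModel : Model Cst Rl ar where
  W := {χ // ReflTransGen (DiaStep ↑D) ρ χ}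
  R χ B := TransGen (DiaStep ↑D) χ.1 B.1
  Dom _ := D
  finDom _ := inferInstance
  η _ _ _ := id
  I _ c := if h : Sum.inr c ∈ D then ⟨_, h⟩ else d₀
  J χ S := {f | Der χ.1 (.rel S fun i => (f i).1)}

theorem canonicalModel_adequate : (canonicalModel D d₀ ρ).Adequate :=
  ⟨fun _ _ _ => TransGen.trans, fun _ _ _ => rfl, fun _ _ => rfl⟩

theorem finite_canonicalModel_W : Finite (canonicalModel D d₀ ρ).W :=
  Set.Finite.to_subtype <| ((DiaStep.finite_setOf_transGen D.finite_toSet ρ).insert ρ).subset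
    fun _ h => reflTransGen_iff_eq_or_transGen.mp h

theorem canonicalModel_irreflexive : Irreflexive (canonicalModel D d₀ ρ).R :=
  fun _ h => lt_irrefl _ (DiaStep.transGen_mdepth_lt h)

theorem canonicalModel_constantDomain : (canonicalModel D d₀ ρ).ConstantDomain :=
  fun _ _ => rfl

variable {D d₀ ρ}

theorem canonicalModel_world_aritySum_le (w : (canonicalModel D d₀ ρ).W) :
    w.1.aritySum ≤ ρ.aritySum := by
  rcases reflTransGen_iff_eq_or_transGen.mp w.2 with h | h
  exacts [(congrArg Fml.aritySum h).le, DiaStep.transGen_aritySum_le h]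

theorem canonicalModel_world_disjoint (hρ : Disjoint {u | Sum.inl u ∈ D} ρ.bv)
    (w : (canonicalModel D d₀ ρ).W) : Disjoint {u | Sum.inl u ∈ D} w.1.bv := by
  rcases reflTransGen_iff_eq_or_transGen.mp w.2 with h | h
  exacts [by rwa [h], hρ.mono_right (DiaStep.transGen_bv_subset h)]

theorem canonicalModel_sat_rel_iff {w : (canonicalModel D d₀ ρ).W} {g : ℕ → D} {S : Rl}
    {ts : Fin (ar S) → ℕ ⊕ Cst} (hc : ∀ c ∈ (Fml.rel S ts).consts, Sum.inr c ∈ D) :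
    (canonicalModel D d₀ ρ).Sat w g (.rel S ts) ↔
      Der w.1 ((Fml.rel S ts).msubst (Subtype.val ∘ g)) := by
  suffices (Fml.rel S ts).msubst (Subtype.val ∘ g)
      = .rel S fun i => ((canonicalModel D d₀ ρ).tval g (ts i)).1 by
    rw [this]; rfl
  refine congrArg _ (funext fun i => ?_)
  rcases hts : ts i with y | c
  · rfl
  · simp [Model.tval, canonicalModel, hc c ⟨i, hts⟩]

end CanonicalModel

section TruthLemma

variable {D : Finset (ℕ ⊕ Cst)} {d₀ : D} {ρ : Fml Cst Rl ar}

theorem canonicalModel_sat_of_conjunct (hρ : Disjoint {u | Sum.inl u ∈ D} ρ.bv) (θ : Fml Cst Rl ar)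
    (hθ : Disjoint {u | Sum.inl u ∈ D} θ.bv) (hc : ∀ c ∈ θ.consts, Sum.inr c ∈ D)
    (w : (canonicalModel D d₀ ρ).W) (g : ℕ → D)
    (h : Conjunct ↑D (θ.msubst (Subtype.val ∘ g)) w.1) : (canonicalModel D d₀ ρ).Sat w g θ := by
  induction θ generalizing w g with
  | top => trivial
  | rel S ts => exact (canonicalModel_sat_rel_iff hc).2 (h.der (canonicalModel_world_disjoint hρ w))
  | and θ₁ θ₂ ih₁ ih₂ =>
    exact ⟨ih₁ (hθ.mono_right Set.subset_union_left) (fun c hc' => hc c (Or.inl hc')) w g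
        ((Conjunct.andl (.refl _)).trans h),
      ih₂ (hθ.mono_right Set.subset_union_right) (fun c hc' => hc c (Or.inr hc')) w g
        ((Conjunct.andr (.refl _)).trans h)⟩
  | dia θ ih => exact ⟨⟨_, w.2.tail h⟩, .single h, ih hθ hc _ g (.refl _)⟩
  | all x θ ih =>
    intro (g' : ℕ → D) hg'
    have hx : Sum.inl x ∉ D := Set.disjoint_right.mp hθ (Set.mem_insert x _)
    have hsat := ih (hθ.mono_right (Set.subset_insert x _)) hc w (Function.update g x (g' x))
      (by rw [← msubst_update_val hx]; exact (Conjunct.all (g' x).2 (.refl _)).trans h)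
    rwa [← Function.eq_update_iff.mpr ⟨rfl, hg'⟩] at hsat

theorem canonicalModel_der_of_sat (hρ : Disjoint {u | Sum.inl u ∈ D} ρ.bv) (θ : Fml Cst Rl ar)
    (hθ : Disjoint {u | Sum.inl u ∈ D} θ.bv) (hc : ∀ c ∈ θ.consts, Sum.inr c ∈ D)
    (hfresh : ρ.aritySum + θ.aritySum < {u | Sum.inl u ∈ D}.ncard)
    (w : (canonicalModel D d₀ ρ).W) (g : ℕ → D) (h : (canonicalModel D d₀ ρ).Sat w g θ) :
    Der w.1 (θ.msubst (Subtype.val ∘ g)) := by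
  induction θ generalizing w g with
  | top => exact .top _
  | rel S ts => exact (canonicalModel_sat_rel_iff hc).1 h
  | and θ₁ θ₂ ih₁ ih₂ =>
    exact .andI
      (ih₁ (hθ.mono_right Set.subset_union_left) (fun c hc' => hc c (Or.inl hc'))
        (by simp only [aritySum] at hfresh; omega) w g h.1)
      (ih₂ (hθ.mono_right Set.subset_union_right) (fun c hc' => hc c (Or.inr hc'))
        (by simp only [aritySum] at hfresh; omega) w g h.2)
  | dia θ ih =>
    obtain ⟨v, hwv, hv⟩ := h
    exact .cut (DiaStep.transGen_der hwv (canonicalModel_world_disjoint hρ w))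
      (.diaMono (ih hθ hc hfresh v g hv))
  | all x θ ih =>
    have hx : Sum.inl x ∉ D := Set.disjoint_right.mp hθ (Set.mem_insert x _)
    set A := θ.msubst (Function.update (Subtype.val ∘ g) x (.inl x))
    have hcard : (w.1.fv ∪ A.fv).ncard < {u | Sum.inl u ∈ D}.ncard := by
      have := Set.ncard_union_le w.1.fv A.fv
      have := (ncard_fv_le_aritySum w.1).trans (canonicalModel_world_aritySum_le w)
      have := (ncard_fv_le_aritySum A).trans_eq (aritySum_msubst θ _)
      simp only [aritySum] at hfresh
      omega
    obtain ⟨v, hvD, hv⟩ := Set.exists_mem_notMem_of_ncard_lt_ncard hcard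
      ((fv_finite _).union (fv_finite _))
    have hvA : v ∉ A.bv := by
      rw [bv_msubst]
      exact Set.disjoint_left.mp hθ hvD ∘ Set.mem_insert_of_mem x
    have hinst : Der w.1 (θ.msubst (Subtype.val ∘ Function.update g x ⟨_, hvD⟩)) :=
      ih (hθ.mono_right (Set.subset_insert x _)) hc hfresh w _
        (h (Function.update g x ⟨_, hvD⟩) fun y hy => Function.update_of_ne hy _ _)
    rw [← msubst_update_val hx] at hinst
    exact Der.all_of_subst_fresh hinst (hv ∘ Or.inl) (hv ∘ Or.inr) hvA
      (by rintro rfl; exact hx hvD)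

end TruthLemma

section ShiftedDomain

variable (N n : ℕ) (C : Finset Cst)

def shiftedDomain : Finset (ℕ ⊕ Cst) := (Finset.Ico N (N + n)).disjSum C

theorem ncard_setOf_inl_mem_shiftedDomain : {u | Sum.inl u ∈ shiftedDomain N n C}.ncard = n := by
  have : {u | Sum.inl u ∈ shiftedDomain N n C} = ↑(Finset.Ico N (N + n)) := by
    ext; simp [shiftedDomain]
  simp [this]

theorem disjoint_shiftedDomain_bv {θ : Fml Cst Rl ar} (hθ : θ.varBound ≤ N) :
    Disjoint {u | Sum.inl u ∈ shiftedDomain N n C} θ.bv :=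
  Set.disjoint_left.mpr fun u hu hb => by
    have := lt_varBound_of_mem_bv hb
    have : N ≤ u := (Finset.mem_Ico.mp (Finset.inl_mem_disjSum.mp hu)).1
    omega

variable {n} (hn : N < n)

def shiftAssignment : ℕ → shiftedDomain N n C :=
  fun y => ⟨.inl (N + y % n), by simpa [shiftedDomain] using Nat.mod_lt y (N.zero_le.trans_lt hn)⟩

theorem msubst_shiftAssignment {θ : Fml Cst Rl ar} (hθ : θ.varBound ≤ N) :
    θ.msubst (Subtype.val ∘ shiftAssignment N C hn) = θ.msubst (shiftBelow N N) :=
  msubst_congr_fv fun y hy => by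
    have hyN : y < N := (lt_varBound_of_mem_fv hy).trans_le hθ
    simp [shiftAssignment, shiftBelow, hyN, Nat.mod_eq_of_lt (hyN.trans hn)]

end ShiftedDomain

theorem constant_domain_completeness (Cst Rl : Type) (ar : Rl → ℕ)
    (φ ψ : Fml Cst Rl ar) (h : ¬ Der φ ψ) :
    ∃ M : Model Cst Rl ar, M.Adequate ∧ Finite M.W ∧ Irreflexive M.R ∧
      M.ConstantDomain ∧
      ∃ (w : M.W) (g : ℕ → M.Dom w), M.Sat w g φ ∧ ¬ M.Sat w g ψ := by
  classical
  set N := max φ.varBound ψ.varBound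
  have hφ : φ.varBound ≤ N := le_max_left _ _
  have hψ : ψ.varBound ≤ N := le_max_right _ _
  set n := N + φ.aritySum + ψ.aritySum + 1
  obtain ⟨C, hC⟩ := (φ.consts_finite.union ψ.consts_finite).exists_finset_coe
  have hCD : ∀ c ∈ φ.consts ∪ ψ.consts, Sum.inr c ∈ shiftedDomain N n C := fun c hc =>
    Finset.inr_mem_disjSum.mpr (Finset.mem_coe.mp (hC ▸ hc))
  let g₀ := shiftAssignment N C (show N < n by omega)
  have hρ := bv_msubst φ (Subtype.val ∘ g₀) ▸ disjoint_shiftedDomain_bv N n C hφ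
  refine ⟨canonicalModel _ (g₀ 0) (φ.msubst (Subtype.val ∘ g₀)), canonicalModel_adequate ..,
    finite_canonicalModel_W .., canonicalModel_irreflexive _ _ _,
    canonicalModel_constantDomain _ _ _, ⟨_, .refl⟩, g₀,
    canonicalModel_sat_of_conjunct hρ φ (disjoint_shiftedDomain_bv N n C hφ)
      (fun c hc => hCD c (.inl hc)) _ g₀ (.refl _), fun hsat => h ?_⟩
  have hder := canonicalModel_der_of_sat hρ ψ (disjoint_shiftedDomain_bv N n C hψ)
    (fun c hc => hCD c (.inr hc))
    (by rw [ncard_setOf_inl_mem_shiftedDomain, aritySum_msubst]; omega) _ g₀ hsat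
  rw [msubst_shiftAssignment N C _ hφ, msubst_shiftAssignment N C _ hψ] at hder
  exact Der.of_msubst_shiftBelow hφ hψ N hder

end QRC1
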